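/- Let c, c' be real numbers with 0 < c < c', let θ̂ ∈ ℝ satisfy cos(2θ̂) < 0, let γ ∈ ℂ, and set ĉ = −1/c and ĉ(θ̂) = exp(−iθ̂)·ĉ. If ĉ(θ̂) ∈ D(θ̂, c, γ), then ĉ(θ̂) ∈ D(θ̂, c', γ). -/
import Mathlib


open Complex

/-- The rapid decay domain on the exceptional divisor, in the coordinate `w`, for the
direction `θ̂` and parameters `c, γ`. -/
def rapidDecayDomain (θhat : ℝ) (c γ : ℂ) : Set ℂ :=
  {w : ℂ | (c * w ^ 2 + 2 * Complex.exp (-(θhat : ℂ) * Complex.I) * w -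
      γ * Complex.exp (-(2 * (θhat : ℂ)) * Complex.I)).re < 0}

/-- For real `0 < c < c'` and `cos(2θ̂) < 0`: if the center `ĉ(θ̂) = e^{−iθ̂}·(−1/c)`
lies in `D(θ̂, c, γ)`, then it lies in `D(θ̂, c', γ)`. -/
theorem center_transfer_cos_neg (c c' : ℝ) (hc : 0 < c) (hcc' : c < c') (θhat : ℝ)
    (hcos : Real.cos (2 * θhat) < 0) (γ : ℂ)
    (h : Complex.exp (-(θhat : ℂ) * Complex.I) * (-1 / (c : ℂ)) ∈
      rapidDecayDomain θhat (c : ℂ) γ) :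
    Complex.exp (-(θhat : ℂ) * Complex.I) * (-1 / (c : ℂ)) ∈
      rapidDecayDomain θhat (c' : ℂ) γ := by
  simp only [rapidDecayDomain, Set.mem_setOf_eq] at h ⊢
  have hc0 : (c : ℂ) ≠ 0 := by exact_mod_cast hc.ne'
  set E : ℂ := Complex.exp (-(θhat : ℂ) * Complex.I) with hE
  have hE2 : E ^ 2 = Complex.exp (-(2 * (θhat : ℂ)) * Complex.I) := by
    rw [hE, ← Complex.exp_nat_mul]; ring_nf
  have key : ∀ d : ℝ, ((d : ℂ) * (E * (-1 / (c : ℂ))) ^ 2 + 2 * E * (E * (-1 / (c : ℂ)))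
      - γ * Complex.exp (-(2 * (θhat : ℂ)) * Complex.I))
      = Complex.exp (-(2 * (θhat : ℂ)) * Complex.I) *
        (((d / c ^ 2 - 2 / c : ℝ) : ℂ) - γ) := by
    intro d
    rw [← hE2]
    push_cast
    field_simp
    ring
  have hre : (Complex.exp (-(2 * (θhat : ℂ)) * Complex.I)).re = Real.cos (2 * θhat) := by
    have : (-(2 * (θhat : ℂ))) = ((-(2 * θhat) : ℝ) : ℂ) := by push_cast; ring
    rw [this, Complex.exp_ofReal_mul_I_re, Real.cos_neg]
  have him : (Complex.exp (-(2 * (θhat : ℂ))) * Complex.I).im = 0 → True := fun _ => trivial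
  have him2 : (Complex.exp (-(2 * (θhat : ℂ)) * Complex.I)).im = -Real.sin (2 * θhat) := by
    have : (-(2 * (θhat : ℂ))) = ((-(2 * θhat) : ℝ) : ℂ) := by push_cast; ring
    rw [this, Complex.exp_ofReal_mul_I_im, Real.sin_neg]
  rw [key c'] at *
  rw [key c] at h
  rw [Complex.mul_re, hre, him2] at h ⊢
  simp only [Complex.sub_re, Complex.sub_im, Complex.ofReal_re, Complex.ofReal_im] at h ⊢
  have hd : Real.cos (2 * θhat) * (c' / c ^ 2 - 2 / c - γ.re)
      = Real.cos (2 * θhat) * (c / c ^ 2 - 2 / c - γ.re)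
        + Real.cos (2 * θhat) * ((c' - c) / c ^ 2) := by ring
  have hpos : 0 < (c' - c) / c ^ 2 := div_pos (by linarith) (by positivity)
  nlinarith [mul_neg_of_neg_of_pos hcos hpos]
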